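/- arXiv:2302.14476 — 5 statements merged into one kernel-verified Lean document; each statement's English description precedes it below -/
import Mathlib

section
/- (Quantum Bézout identity, one-colored version) For all natural numbers m, n, there exist polynomials a, b ∈ ℤ[x] such that a·[m] + b·[n] = [gcd(m,n)], where [k] denotes the k-th quantum number. -/
/-!
Modulo `[m]`, the addition formula gives `[k + m] ≡ -[k] [m - 1]`, and Cassini's identity
`[m]² - [m - 1] [m + 1] = 1` makes `[m - 1]` a unit. Hence the ideals `([m], [k + m])` and
`([m], [k])` coincide, so the ideal `([m], [n])` is unchanged along the Euclidean algorithm and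
equals `([gcd m n])`.
-/

open Polynomial

noncomputable def qnum : ℕ → Polynomial ℤ
  | 0 => 0
  | 1 => 1
  | (n + 2) => X * qnum (n + 1) - qnum n

@[simp]
lemma qnum_zero : qnum 0 = 0 := rfl

@[simp]
lemma qnum_one : qnum 1 = 1 := rfl

lemma qnum_add_two (n : ℕ) : qnum (n + 2) = X * qnum (n + 1) - qnum n := rfl

lemma qnum_add_add_one (m n : ℕ) :
    qnum (m + n + 1) = qnum (m + 1) * qnum (n + 1) - qnum m * qnum n := by
  induction m generalizing n with
  | zero => simp
  | succ m ih =>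
    rw [show m + 1 + n + 1 = m + (n + 1) + 1 by omega, ih, qnum_add_two, qnum_add_two]
    ring

lemma qnum_sq_sub_mul (n : ℕ) : qnum (n + 1) ^ 2 - qnum n * qnum (n + 2) = 1 := by
  induction n with
  | zero => simp
  | succ n ih =>
    rw [qnum_add_two (n + 1), ← ih, qnum_add_two n]
    ring

lemma span_qnum_add_self (k m : ℕ) :
    Ideal.span {qnum m, qnum (k + m)} = Ideal.span {qnum m, qnum k} := by
  rcases m with _ | m
  · simp
  have hsum : qnum (k + (m + 1)) ∈ Ideal.span {qnum (m + 1), qnum k} :=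
    Ideal.mem_span_pair.mpr
      ⟨qnum (k + 1), -qnum m, by rw [← add_assoc, qnum_add_add_one k m]; ring⟩
  have hk : qnum k ∈ Ideal.span {qnum (m + 1), qnum (k + (m + 1))} := by
    refine Ideal.mem_span_pair.mpr
      ⟨qnum k * qnum (m + 1) - qnum (m + 2) * qnum (k + 1), qnum (m + 2), ?_⟩
    rw [← add_assoc, qnum_add_add_one k m]
    linear_combination qnum k * qnum_sq_sub_mul m
  apply le_antisymm <;> refine Ideal.span_le.mpr (Set.insert_subset_iff.mpr
    ⟨Ideal.subset_span (Set.mem_insert _ _), Set.singleton_subset_iff.mpr ?_⟩)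
  exacts [hsum, hk]

lemma span_qnum_mod (m n : ℕ) :
    Ideal.span {qnum m, qnum n} = Ideal.span {qnum m, qnum (n % m)} := by
  conv_lhs => rw [← Nat.mod_add_div n m]
  induction n / m with
  | zero => simp
  | succ q ih => rw [Nat.mul_succ, ← add_assoc, span_qnum_add_self, ih]

theorem span_qnum_pair (m n : ℕ) :
    Ideal.span {qnum m, qnum n} = Ideal.span {qnum (Nat.gcd m n)} := by
  induction m, n using Nat.gcd.induction with
  | H0 n => simp
  | H1 m n _ ih => rw [Nat.gcd_rec, ← ih, span_qnum_mod, Ideal.span_pair_comm]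

theorem quantum_bezout (m n : ℕ) :
    ∃ a b : Polynomial ℤ, a * qnum m + b * qnum n = qnum (Nat.gcd m n) :=
  Ideal.mem_span_pair.mp (span_qnum_pair m n ▸ Ideal.mem_span_singleton_self _)
end

section
/- For n > 2, the cyclotomic part Θ_n ∈ ℤ[x] is an even polynomial; writing Θ_n(x) = Ψ_n(x²), the polynomial Ψ_n ∈ ℤ[x] is the minimal polynomial over ℚ of 4cos²(π/n). -/
open Polynomial

noncomputable def thetaR (n : ℕ) : Polynomial ℝ :=
  ∏ k ∈ (Finset.Ico 1 n).filter (fun k => Nat.Coprime k n),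
    (X - C (2 * Real.cos (k * Real.pi / n)))

/-! ### Auxiliary lemmas -/

theorem aux_coeff_comp_negX (p : Polynomial ℤ) (i : ℕ) :
    (p.comp (-X)).coeff i = (-1)^i * p.coeff i := by
  induction p using Polynomial.induction_on' with
  | add p q hp hq => simp [add_comp, hp, hq, mul_add]
  | monomial n a =>
    have h1 : ((-X : Polynomial ℤ))^n = (-1)^n * X^n := neg_pow X n
    have h2 : ((-1 : Polynomial ℤ)) = C (-1) := by simp
    rw [monomial_comp, h1, h2, ← C_pow]
    simp only [coeff_monomial, mul_comm (C a), coeff_C_mul, coeff_mul_C, coeff_X_pow,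
      ite_mul, zero_mul, mul_ite, mul_zero]
    clear h1 h2
    split_ifs with h h'
    · rw [h]; ring
    · exact absurd h.symm h'
    · exact absurd ‹n = i›.symm h
    · rfl

theorem aux_even_decomp (p : Polynomial ℤ) (hp : p.comp (-X) = p) :
    ∃ q : Polynomial ℤ, p = q.comp (X ^ 2) ∧ ∀ i, q.coeff i = p.coeff (2 * i) := by
  have hodd : ∀ m, Odd m → p.coeff m = 0 := by
    intro m hm
    have := aux_coeff_comp_negX p m
    rw [hp, hm.neg_one_pow] at this
    linarith
  refine ⟨∑ i ∈ Finset.range (p.natDegree + 1), C (p.coeff (2 * i)) * X ^ i, ?_, ?_⟩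
  · ext m
    rw [comp, eval₂_finset_sum]
    simp only [eval₂_mul, eval₂_C, eval₂_X_pow, ← pow_mul, finset_sum_coeff, coeff_C_mul,
      coeff_X_pow]
    rcases Nat.even_or_odd m with ⟨j, hj⟩ | hm
    · have hj2 : m = 2 * j := by omega
      rw [Finset.sum_eq_single j]
      · simp [hj2]
      · intro b _ hb
        have hne : ¬ (m = 2 * b) := by omega
        simp [hne]
      · intro hj'
        have hjd : p.natDegree < 2 * j := by
          simp only [Finset.mem_range] at hj'; omega
        have h0 : p.coeff (2 * j) = 0 := coeff_eq_zero_of_natDegree_lt hjd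
        simp [hj2, h0]
    · rw [hodd m hm, Finset.sum_eq_zero]
      intro b _
      have hne : ¬ (m = 2 * b) := by rcases hm with ⟨c, hc⟩; omega
      simp [hne]
  · intro i
    rw [finset_sum_coeff]
    by_cases hi : i ∈ Finset.range (p.natDegree + 1)
    · rw [Finset.sum_eq_single i]
      · simp
      · intro b _ hb; simp [coeff_C_mul, coeff_X_pow, Ne.symm hb]
      · intro h; exact absurd hi h
    · simp only [Finset.mem_range, not_lt] at hi
      have h1 : p.coeff (2 * i) = 0 := coeff_eq_zero_of_natDegree_lt (by omega)
      rw [h1, Finset.sum_eq_zero]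
      intro b hb
      have hne : i ≠ b := by simp only [Finset.mem_range] at hb; omega
      simp [coeff_C_mul, coeff_X_pow, hne]

lemma aux_mem_S {n k : ℕ} :
    k ∈ (Finset.Ico 1 n).filter (fun k => Nat.Coprime k n) ↔
      (1 ≤ k ∧ k < n ∧ Nat.Coprime k n) := by
  simp [Finset.mem_filter, Finset.mem_Ico, and_assoc]

lemma aux_S_card {n : ℕ} (hn : 1 < n) :
    ((Finset.Ico 1 n).filter (fun k => Nat.Coprime k n)).card = n.totient := by
  rw [Nat.totient]
  congr 1
  ext k
  simp only [Finset.mem_filter, Finset.mem_Ico, Finset.mem_range]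
  constructor
  · rintro ⟨⟨h1, h2⟩, h3⟩; exact ⟨h2, Nat.Coprime.symm h3⟩
  · rintro ⟨h2, h3⟩
    have : k ≠ 0 := by
      rintro rfl
      simp [Nat.coprime_zero_right] at h3
      omega
    exact ⟨⟨by omega, h2⟩, Nat.Coprime.symm h3⟩

lemma aux_cos_flip {n k : ℕ} (hk : k < n) (hn : 0 < n) :
    2 * Real.cos (((n - k : ℕ) : ℝ) * Real.pi / n) = -(2 * Real.cos (k * Real.pi / n)) := by
  have hcast : ((n - k : ℕ) : ℝ) = (n : ℝ) - k := by
    push_cast [Nat.cast_sub hk.le]; ring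
  have hn' : (n : ℝ) ≠ 0 := by positivity
  have : ((n - k : ℕ) : ℝ) * Real.pi / n = Real.pi - k * Real.pi / n := by
    rw [hcast]; field_simp
  rw [this, Real.cos_pi_sub]; ring

lemma aux_coprime_sub {n k : ℕ} (h : k ≤ n) (hc : Nat.Coprime k n) : Nat.Coprime (n - k) n := by
  have h1 : (n-k).Coprime k := (Nat.coprime_sub_self_left h).2 hc.symm
  have h2 : (n-k).Coprime (k + (n-k)) := Nat.coprime_add_self_right.2 h1
  rwa [show k + (n-k) = n by omega] at h2

lemma aux_flip_mem {n k : ℕ} (hn : 1 < n)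
    (hk : k ∈ (Finset.Ico 1 n).filter (fun k => Nat.Coprime k n)) :
    n - k ∈ (Finset.Ico 1 n).filter (fun k => Nat.Coprime k n) := by
  rw [aux_mem_S] at hk ⊢
  obtain ⟨h1, h2, h3⟩ := hk
  exact ⟨by omega, by omega, aux_coprime_sub h2.le h3⟩

lemma aux_thetaR_comp_neg {n : ℕ} (hn : 2 < n) : (thetaR n).comp (-X) = thetaR n := by
  classical
  set S := (Finset.Ico 1 n).filter (fun k => Nat.Coprime k n) with hS
  have hcard : S.card = n.totient := aux_S_card (by omega)
  have heven : Even S.card := hcard ▸ Nat.totient_even hn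
  rw [thetaR, prod_comp]
  have step1 : ∀ k ∈ S, (X - C (2 * Real.cos (k * Real.pi / n))).comp (-X)
      = -(X + C (2 * Real.cos (k * Real.pi / n))) := by
    intro k _
    rw [sub_comp, X_comp, C_comp]; ring
  rw [Finset.prod_congr rfl step1]
  have step2 : ∀ k ∈ S, -(X + C (2 * Real.cos (k * Real.pi / n)))
      = (-1) * (X + C (2 * Real.cos (k * Real.pi / n))) := by intro k _; ring
  rw [Finset.prod_congr rfl step2, Finset.prod_mul_distrib, Finset.prod_const,
    heven.neg_one_pow, one_mul]
  apply Finset.prod_nbij' (fun k => n - k) (fun k => n - k)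
  · intro k hk; exact aux_flip_mem (by omega) hk
  · intro k hk; exact aux_flip_mem (by omega) hk
  · intro k hk; rw [aux_mem_S] at hk; omega
  · intro k hk; rw [aux_mem_S] at hk; omega
  · intro k hk
    rw [aux_mem_S] at hk
    rw [aux_cos_flip (by omega) (by omega), map_neg, sub_neg_eq_add]

lemma aux_conj_root {n k : ℕ} (hn : 2 < n) (hk : Nat.Coprime k n) :
    Polynomial.aeval (2 + 2 * Real.cos (2 * Real.pi * k / n) : ℝ)
      (minpoly ℚ (2 + 2 * Real.cos (2 * Real.pi / n) : ℝ)) = 0 := by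
  have hn0 : (n : ℕ) ≠ 0 := by omega
  have hn0' : 0 < n := by omega
  set ζ : ℂ := Complex.exp (2 * Real.pi * Complex.I / n) with hζdef
  have hζ : IsPrimitiveRoot ζ n := Complex.isPrimitiveRoot_exp n hn0
  have hintZ : IsIntegral ℤ ζ := hζ.isIntegral hn0'
  have hint : IsIntegral ℚ ζ := hintZ.tower_top
  set K := IntermediateField.adjoin ℚ ({ζ} : Set ℂ)
  let pb : PowerBasis ℚ K := IntermediateField.adjoin.powerBasis hint
  have hgen : pb.gen = IntermediateField.AdjoinSimple.gen ℚ ζ := rfl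
  have hmingen : minpoly ℚ pb.gen = minpoly ℚ ζ := by
    rw [hgen]; exact IntermediateField.minpoly_gen (F := ℚ) (α := ζ)
  have hk' : IsPrimitiveRoot (ζ ^ k) n := hζ.pow_of_coprime k hk
  have hroot : Polynomial.aeval (ζ ^ k) (minpoly ℚ ζ) = 0 := by
    rw [← Polynomial.cyclotomic_eq_minpoly_rat hζ hn0', Polynomial.aeval_def,
      ← Polynomial.eval_map, Polynomial.map_cyclotomic]
    exact hk'.isRoot_cyclotomic hn0'
  let σ : K →ₐ[ℚ] ℂ := pb.lift (ζ ^ k) (by rw [hmingen]; exact hroot)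
  have hσgen : σ pb.gen = ζ ^ k := PowerBasis.lift_gen pb _ _
  set u : K := 2 + pb.gen + pb.gen⁻¹ with hu
  have hgenmap : algebraMap K ℂ pb.gen = ζ := by
    rw [hgen]; exact IntermediateField.AdjoinSimple.algebraMap_gen ℚ ζ
  have halg : algebraMap K ℂ u = 2 + ζ + ζ⁻¹ := by
    rw [hu, map_add, map_add, map_inv₀, hgenmap, map_ofNat]
  have hσu : σ u = 2 + ζ ^ k + (ζ ^ k)⁻¹ := by
    rw [hu, map_add, map_add, map_inv₀, hσgen, map_ofNat]
  have hminpoly_eq : minpoly ℚ (2 + ζ + ζ⁻¹ : ℂ) = minpoly ℚ (2 + ζ ^ k + (ζ ^ k)⁻¹ : ℂ) := by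
    rw [← halg, minpoly.algebraMap_eq (algebraMap K ℂ).injective, ← hσu,
      minpoly.algHom_eq σ σ.toRingHom.injective]
  have hcos : ∀ m : ℕ, ζ ^ m + (ζ ^ m)⁻¹ = ((2 * Real.cos (2 * Real.pi * m / n) : ℝ) : ℂ) := by
    intro m
    have h1 : ζ ^ m = Complex.exp (((2 * Real.pi * m / n : ℝ) : ℂ) * Complex.I) := by
      rw [hζdef, ← Complex.exp_nat_mul]
      congr 1
      push_cast
      ring
    rw [h1, ← Complex.exp_neg]
    rw [Complex.ofReal_mul, Complex.ofReal_cos, Complex.cos]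
    push_cast
    ring_nf
  have hαc : ((2 + 2 * Real.cos (2 * Real.pi / n) : ℝ) : ℂ) = 2 + ζ + ζ⁻¹ := by
    have h1 : ζ + ζ⁻¹ = ((2 * Real.cos (2 * Real.pi / n) : ℝ) : ℂ) := by
      simpa using hcos 1
    rw [Complex.ofReal_add, ← h1]
    push_cast
    ring
  have hβc : ((2 + 2 * Real.cos (2 * Real.pi * k / n) : ℝ) : ℂ) = 2 + ζ ^ k + (ζ ^ k)⁻¹ := by
    rw [Complex.ofReal_add, ← hcos k]
    push_cast
    ring
  let f : ℝ →ₐ[ℚ] ℂ := Complex.ofRealAm.restrictScalars ℚ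
  have hf : ∀ x : ℝ, f x = (x : ℂ) := fun x => rfl
  have hfinj : Function.Injective f := fun a b h => by
    rw [hf, hf] at h; exact_mod_cast h
  have hminR : minpoly ℚ (2 + 2 * Real.cos (2 * Real.pi / n) : ℝ)
      = minpoly ℚ (2 + ζ + ζ⁻¹ : ℂ) := by
    rw [← minpoly.algHom_eq f hfinj, hf, hαc]
  have key : Polynomial.aeval ((2 + 2 * Real.cos (2 * Real.pi * k / n) : ℝ) : ℂ)
      (minpoly ℚ (2 + 2 * Real.cos (2 * Real.pi / n) : ℝ)) = 0 := by
    rw [hβc, hminR, hminpoly_eq]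
    exact minpoly.aeval ℚ _
  have htrans := Polynomial.aeval_algHom_apply f (2 + 2 * Real.cos (2 * Real.pi * k / n) : ℝ)
      (minpoly ℚ (2 + 2 * Real.cos (2 * Real.pi / n) : ℝ))
  rw [hf] at htrans
  rw [htrans, hf] at key
  exact_mod_cast key

theorem cyclotomic_part_even_minpoly (Θ : ℕ → Polynomial ℤ)
    (hΘ : ∀ m, 0 < m → (Θ m).map (Int.castRingHom ℝ) = thetaR m)
    (n : ℕ) (hn : 2 < n) :
    ∃ Ψ : Polynomial ℤ, Θ n = Ψ.comp (X ^ 2) ∧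
      Ψ.map (Int.castRingHom ℚ) = minpoly ℚ (4 * Real.cos (Real.pi / n) ^ 2 : ℝ) := by
  classical
  have hn0 : 0 < n := by omega
  set S := (Finset.Ico 1 n).filter (fun k => Nat.Coprime k n) with hSdef
  have hmap : (Θ n).map (Int.castRingHom ℝ) = thetaR n := hΘ n hn0
  have hinj : Function.Injective (Int.castRingHom ℝ) := Int.cast_injective
  have hcompneg : (Θ n).comp (-X) = Θ n := by
    apply Polynomial.map_injective _ hinj
    rw [Polynomial.map_comp, Polynomial.map_neg, Polynomial.map_X, hmap,
      aux_thetaR_comp_neg hn]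
  obtain ⟨Ψ, hΨcomp, hΨcoeff⟩ := aux_even_decomp (Θ n) hcompneg
  refine ⟨Ψ, hΨcomp, ?_⟩
  -- monicity and degrees
  have hθmonic : (thetaR n).Monic :=
    monic_prod_of_monic _ _ (fun k _ => monic_X_sub_C _)
  have hθdeg : (thetaR n).natDegree = n.totient := by
    rw [thetaR, natDegree_prod_of_monic _ _ (fun k _ => monic_X_sub_C _)]
    simp only [natDegree_X_sub_C, Finset.sum_const, smul_eq_mul, mul_one]
    exact aux_S_card (by omega)
  have hΘmonic : (Θ n).Monic := hinj.monic_map_iff.2 (by rw [hmap]; exact hθmonic)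
  have hΘdeg : (Θ n).natDegree = n.totient := by
    rw [← natDegree_map_eq_of_injective hinj, hmap, hθdeg]
  have hdeg2 : (Θ n).natDegree = 2 * Ψ.natDegree := by
    rw [hΨcomp, natDegree_comp, natDegree_X_pow]; ring
  have hΨmonic : Ψ.Monic := by
    have h1 : (Ψ.comp (X^2 : Polynomial ℤ)).leadingCoeff
        = Ψ.leadingCoeff * (X^2 : Polynomial ℤ).leadingCoeff ^ Ψ.natDegree :=
      leadingCoeff_comp (by simp [natDegree_X_pow])
    rw [← hΨcomp, hΘmonic.leadingCoeff, leadingCoeff_X_pow, one_pow, mul_one] at h1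
    exact h1.symm
  set Ψq := Ψ.map (Int.castRingHom ℚ) with hΨqdef
  have hinjQ : Function.Injective (Int.castRingHom ℚ) := Int.cast_injective
  have hΨqmonic : Ψq.Monic := hΨmonic.map _
  have hΨqdeg : Ψq.natDegree = Ψ.natDegree := natDegree_map_eq_of_injective hinjQ Ψ
  -- the algebraic number
  set α : ℝ := 4 * Real.cos (Real.pi / n) ^ 2 with hα
  have hnR : (n : ℝ) ≠ 0 := by positivity
  have hαid : α = 2 + 2 * Real.cos (2 * Real.pi / n) := by
    rw [hα, Real.cos_sq (Real.pi / n)]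
    rw [show 2 * (Real.pi / n) = 2 * Real.pi / n by ring]
    ring
  -- eval at root
  have h1S : (1 : ℕ) ∈ S := by
    rw [hSdef, aux_mem_S]; exact ⟨le_rfl, by omega, Nat.coprime_one_left n⟩
  have hθeval : (thetaR n).eval (2 * Real.cos (Real.pi / n)) = 0 := by
    rw [thetaR, eval_prod]
    apply Finset.prod_eq_zero h1S
    simp
  have hΨαℝ : (Ψ.map (Int.castRingHom ℝ)).eval α = 0 := by
    have h2 : ((Θ n).map (Int.castRingHom ℝ)).eval (2 * Real.cos (Real.pi / n)) = 0 := by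
      rw [hmap]; exact hθeval
    rw [hΨcomp, Polynomial.map_comp, Polynomial.map_pow, Polynomial.map_X,
      eval_comp, eval_pow, eval_X] at h2
    rwa [show (2 * Real.cos (Real.pi / n)) ^ 2 = α by rw [hα]; ring] at h2
  have hΨαq : Polynomial.aeval α Ψq = 0 := by
    rw [hΨqdef, aeval_def, eval₂_eq_eval_map, Polynomial.map_map,
      RingHom.ext_int ((algebraMap ℚ ℝ).comp (Int.castRingHom ℚ)) (Int.castRingHom ℝ)]
    exact hΨαℝ
  have hint : IsIntegral ℚ α := ⟨Ψq, hΨqmonic, hΨαq⟩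
  set p := minpoly ℚ α with hpdef
  have hpmonic : p.Monic := minpoly.monic hint
  have hpdvd : p ∣ Ψq := minpoly.dvd ℚ α hΨαq
  -- half set
  set Shalf := S.filter (fun k => 2 * k < n) with hShalf
  have hne2k : ∀ k ∈ S, 2 * k ≠ n := by
    intro k hk h
    rw [hSdef, aux_mem_S] at hk
    obtain ⟨h1, h2, h3⟩ := hk
    have hdvd : k ∣ n := ⟨2, by omega⟩
    have := Nat.gcd_eq_left hdvd
    rw [h3] at this
    omega
  have hcard2 : S.card = 2 * Shalf.card := by
    have hsplit : Shalf.card + (S.filter (fun k => ¬ 2 * k < n)).card = S.card :=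
      Finset.card_filter_add_card_filter_not (s := S) (p := fun k => 2 * k < n)
    have hbij : Shalf.card = (S.filter (fun k => ¬ 2 * k < n)).card := by
      apply Finset.card_nbij' (fun k => n - k) (fun k => n - k)
      · intro k hk
        rw [Finset.mem_coe, hShalf, Finset.mem_filter] at hk
        obtain ⟨hkS, hk2⟩ := hk
        rw [Finset.mem_coe, Finset.mem_filter]
        have hkS' : k ∈ (Finset.Ico 1 n).filter (fun k => Nat.Coprime k n) := hkS
        rw [aux_mem_S] at hkS'
        refine ⟨aux_flip_mem (by omega) hkS, by beta_reduce; omega⟩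
      · intro k hk
        rw [Finset.mem_coe, Finset.mem_filter] at hk
        obtain ⟨hkS, hk2⟩ := hk
        have hkS' : k ∈ (Finset.Ico 1 n).filter (fun k => Nat.Coprime k n) := hkS
        rw [aux_mem_S] at hkS'
        have hne := hne2k k hkS
        rw [Finset.mem_coe, hShalf, Finset.mem_filter]
        refine ⟨aux_flip_mem (by omega) hkS, by beta_reduce; omega⟩
      · intro k hk
        rw [Finset.mem_coe, hShalf, Finset.mem_filter, hSdef, aux_mem_S] at hk
        beta_reduce; omega
      · intro k hk
        rw [Finset.mem_coe, Finset.mem_filter, hSdef, aux_mem_S] at hk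
        beta_reduce; omega
    omega
  -- injectivity of the value map on Shalf
  have hπpos : 0 < Real.pi := Real.pi_pos
  have hmemIcc : ∀ k ∈ Shalf, (2 * Real.pi * k / n) ∈ Set.Icc 0 Real.pi := by
    intro k hk
    rw [hShalf, Finset.mem_filter, hSdef, aux_mem_S] at hk
    obtain ⟨⟨h1, h2, h3⟩, h4⟩ := hk
    constructor
    · positivity
    · rw [div_le_iff₀ (by positivity)]
      have hk' : (2 * (k : ℝ)) ≤ n := by exact_mod_cast (by omega : 2 * k ≤ n)
      nlinarith
  have hinjOn : Set.InjOn (fun k : ℕ => 2 + 2 * Real.cos (2 * Real.pi * k / n)) Shalf := by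
    intro a ha b hb hab
    simp only at hab
    have hcoseq : Real.cos (2 * Real.pi * a / n) = Real.cos (2 * Real.pi * b / n) := by
      linarith
    have := Real.injOn_cos (hmemIcc a ha) (hmemIcc b hb) hcoseq
    have hne0 : (2 * Real.pi / (n:ℝ)) ≠ 0 := by positivity
    have h2 : (2 * Real.pi / (n:ℝ)) * a = (2 * Real.pi / (n:ℝ)) * b := by
      linear_combination this
    have hab' : (a : ℝ) = b := mul_left_cancel₀ hne0 h2
    exact_mod_cast hab'
  -- root counting
  set pr := p.map (algebraMap ℚ ℝ) with hprdef
  have hp0 : p ≠ 0 := minpoly.ne_zero hint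
  have hpr0 : pr ≠ 0 := (Polynomial.map_ne_zero_iff (algebraMap ℚ ℝ).injective).2 hp0
  have hfroot : ∀ k ∈ Shalf,
      (2 + 2 * Real.cos (2 * Real.pi * k / n)) ∈ pr.roots.toFinset := by
    intro k hk
    rw [hShalf, Finset.mem_filter, hSdef, aux_mem_S] at hk
    obtain ⟨⟨h1, h2, h3⟩, h4⟩ := hk
    rw [Multiset.mem_toFinset, Polynomial.mem_roots']
    refine ⟨hpr0, ?_⟩
    have hcj := aux_conj_root hn h3
    show Polynomial.eval _ pr = 0
    rw [hprdef, Polynomial.eval_map, ← Polynomial.aeval_def, hpdef, hαid]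
    exact hcj
  have hcardle : Shalf.card ≤ pr.roots.toFinset.card :=
    Finset.card_le_card_of_injOn _ hfroot hinjOn
  have hrootsle : pr.roots.toFinset.card ≤ pr.natDegree :=
    le_trans (Multiset.toFinset_card_le _) (Polynomial.card_roots' pr)
  have hprdeg : pr.natDegree = p.natDegree := natDegree_map _
  have hdegle : Ψq.natDegree ≤ p.natDegree := by
    have hScard : S.card = n.totient := aux_S_card (by omega)
    omega
  exact (eq_of_monic_of_associated hpmonic hΨqmonic
    (associated_of_dvd_of_natDegree_le hpdvd hΨqmonic.ne_zero hdegle)).symm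
end

section
/- For n > 2, the polynomial Ψ_n(x_s·x_t) is irreducible in the two-variable polynomial ring ℤ[x_s, x_t], where Ψ_n ∈ ℤ[x] is the minimal polynomial of 4cos²(π/n). -/
open Polynomial

noncomputable section

namespace PsiAux

variable (R : Type*) [CommRing R]

/-- Naturality of `ℤ`-polynomial evaluation with respect to arbitrary ring homs. -/
lemma aeval_natural {A B : Type*} [CommRing A] [CommRing B] [Algebra ℤ A] [Algebra ℤ B]
    (g : A →+* B) (x : A)
    (Ψ : Polynomial ℤ) :
    g (Polynomial.aeval x Ψ) = Polynomial.aeval (g x) Ψ := by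
  rw [Polynomial.aeval_def, Polynomial.aeval_def, Polynomial.hom_eval₂]
  congr 1
  exact Subsingleton.elim _ _

/-- The algebra hom on `R[X][Y]` swapping the two variables. -/
def swapHom : Polynomial (Polynomial R) →ₐ[R] Polynomial (Polynomial R) :=
  Polynomial.aevalTower (Polynomial.aeval Polynomial.X) (Polynomial.C Polynomial.X)

@[simp] lemma swapHom_X : swapHom R (Polynomial.X) = Polynomial.C Polynomial.X :=
  Polynomial.aevalTower_X _ _

@[simp] lemma swapHom_C (p : Polynomial R) :
    swapHom R (Polynomial.C p) = Polynomial.aeval Polynomial.X p :=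
  Polynomial.aevalTower_C _ _ _

lemma swapHom_comp : (swapHom R).comp (swapHom R) = AlgHom.id R _ := by
  apply Polynomial.algHom_ext'
  · apply Polynomial.algHom_ext
    simp
  · simp

/-- The algebra equivalence on `R[X][Y]` swapping the two variables. -/
def swapEquiv : Polynomial (Polynomial R) ≃ₐ[R] Polynomial (Polynomial R) :=
  AlgEquiv.ofAlgHom (swapHom R) (swapHom R) (swapHom_comp R) (swapHom_comp R)

@[simp] lemma swapEquiv_apply (p : Polynomial (Polynomial R)) :
    swapEquiv R p = swapHom R p := rfl

/-- The algebra equivalence `R[x₀,x₁] ≃ (R[x])[y]` with `x₀ ↦ Y` (outer) and `x₁ ↦ C X`. -/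
def E : MvPolynomial (Fin 2) R ≃ₐ[R] Polynomial (Polynomial R) :=
  (MvPolynomial.finSuccEquiv R 1).trans
    (Polynomial.mapAlgEquiv
      ((MvPolynomial.finSuccEquiv R 0).trans
        (Polynomial.mapAlgEquiv (MvPolynomial.isEmptyAlgEquiv R (Fin 0)))))

@[simp] lemma E_X0 : E R (MvPolynomial.X 0) = Polynomial.X := by
  simp [E, MvPolynomial.finSuccEquiv_X_zero]

@[simp] lemma E_X1 : E R (MvPolynomial.X 1) = Polynomial.C Polynomial.X := by
  have h1 : (1 : Fin 2) = Fin.succ 0 := rfl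
  rw [E, AlgEquiv.trans_apply, h1, MvPolynomial.finSuccEquiv_X_succ]
  simp [MvPolynomial.finSuccEquiv_X_zero]

variable {F : Type*} [Field F]

/-- The automorphism of `F[X]` given by `X ↦ t • X` for `t ≠ 0`. -/
def scaleEquiv (t : F) (ht : t ≠ 0) : Polynomial F ≃ₐ[F] Polynomial F :=
  AlgEquiv.ofAlgHom (Polynomial.aeval (Polynomial.C t * Polynomial.X))
    (Polynomial.aeval (Polynomial.C t⁻¹ * Polynomial.X))
    (by
      apply Polynomial.algHom_ext
      rw [AlgHom.comp_apply, Polynomial.aeval_X, map_mul, Polynomial.aeval_C, Polynomial.aeval_X,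
        Polynomial.algebraMap_eq, ← mul_assoc, ← Polynomial.C_mul, inv_mul_cancel₀ ht,
        Polynomial.C_1, one_mul, AlgHom.id_apply]
      )
    (by
      apply Polynomial.algHom_ext
      rw [AlgHom.comp_apply, Polynomial.aeval_X, map_mul, Polynomial.aeval_C, Polynomial.aeval_X,
        Polynomial.algebraMap_eq, ← mul_assoc, ← Polynomial.C_mul, mul_inv_cancel₀ ht,
        Polynomial.C_1, one_mul, AlgHom.id_apply]
      )

@[simp] lemma scaleEquiv_X (t : F) (ht : t ≠ 0) :
    scaleEquiv t ht Polynomial.X = Polynomial.C t * Polynomial.X := by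
  show Polynomial.aeval (Polynomial.C t * Polynomial.X) (Polynomial.X : Polynomial F) = _
  rw [Polynomial.aeval_X]

lemma isIntegral_aux (n : ℕ) (hn : 2 < n) :
    IsIntegral ℚ (4 * Real.cos (Real.pi / n) ^ 2 : ℝ) := by
  have hn0 : (n : ℝ) ≠ 0 := by positivity
  have hcos : IsAlgebraic ℚ (Real.cos (Real.pi / n)) := by
    refine ⟨Polynomial.Chebyshev.T ℚ n + 1, ?_, ?_⟩
    · intro h
      have h2 : ((Polynomial.Chebyshev.T ℚ (n : ℤ) + 1).map (algebraMap ℚ ℝ)).eval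
          (Real.cos 0) = 2 := by
        rw [Polynomial.map_add, Polynomial.Chebyshev.map_T, Polynomial.map_one,
          Polynomial.eval_add, Polynomial.eval_one, Polynomial.Chebyshev.T_real_cos]
        norm_num
      rw [h] at h2
      simp at h2
    · rw [Polynomial.aeval_def, ← Polynomial.eval_map, Polynomial.map_add,
        Polynomial.Chebyshev.map_T, Polynomial.map_one, Polynomial.eval_add,
        Polynomial.eval_one, Polynomial.Chebyshev.T_real_cos]
      have : ((n : ℤ) : ℝ) * (Real.pi / n) = Real.pi := by
        push_cast
        field_simp
      rw [this, Real.cos_pi]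
      ring
  have hcosI : IsIntegral ℚ (Real.cos (Real.pi / n)) :=
    (isAlgebraic_iff_isIntegral).mp hcos
  have h4 : IsIntegral ℚ (4 : ℝ) := by
    have := isIntegral_algebraMap (R := ℚ) (A := ℝ) (x := 4)
    simpa using this
  exact h4.mul (hcosI.pow 2)

lemma alpha_ne_zero (n : ℕ) (hn : 2 < n) :
    (4 * Real.cos (Real.pi / n) ^ 2 : ℝ) ≠ 0 := by
  have hn0 : (0 : ℝ) < n := by positivity
  have h1 : 0 < Real.pi / n := by positivity
  have h2 : Real.pi / n < Real.pi / 2 :=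
    div_lt_div_of_pos_left Real.pi_pos (by norm_num) (by exact_mod_cast hn)
  have hcos : 0 < Real.cos (Real.pi / n) :=
    Real.cos_pos_of_mem_Ioo ⟨by linarith, h2⟩
  positivity

end PsiAux

end

theorem psi_product_irreducible (n : ℕ) (hn : 2 < n) (Ψ : Polynomial ℤ)
    (hΨ : Ψ.map (Int.castRingHom ℚ) = minpoly ℚ (4 * Real.cos (Real.pi / n) ^ 2 : ℝ)) :
    Irreducible
      (Polynomial.aeval (MvPolynomial.X 0 * MvPolynomial.X 1 : MvPolynomial (Fin 2) ℤ) Ψ) := by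
  classical
  set α : ℝ := 4 * Real.cos (Real.pi / n) ^ 2 with hα
  have hint : IsIntegral ℚ α := PsiAux.isIntegral_aux n hn
  have hα0 : α ≠ 0 := PsiAux.alpha_ne_zero n hn
  have hinj : Function.Injective (Int.castRingHom ℚ) := fun a b h => by
    exact_mod_cast Rat.intCast_injective h
  -- basic facts about Ψ
  have hq_irr : Irreducible (minpoly ℚ α) := minpoly.irreducible hint
  have hΨmonic : Ψ.Monic :=
    Polynomial.monic_of_injective hinj (by rw [hΨ]; exact minpoly.monic hint)
  have hΨ0 : Ψ.coeff 0 ≠ 0 := by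
    intro h
    have h2 : (minpoly ℚ α).coeff 0 = 0 := by
      rw [← hΨ, Polynomial.coeff_map, h]
      simp
    exact hα0 ((minpoly.coeff_zero_eq_zero hint).mp h2)
  have hΨirr : Irreducible Ψ :=
    hΨmonic.isPrimitive.irreducible_of_irreducible_map_of_injective hinj
      (by rw [hΨ]; exact hq_irr)
  have hΨprime : Prime Ψ := UniqueFactorizationMonoid.irreducible_iff_prime.mp hΨirr
  -- Ψ in the outer variable of A[y] is `Ψ.map`
  have haevalX : ∀ (A : Type) [CommRing A] [Algebra ℤ A],
      Polynomial.aeval (Polynomial.X : Polynomial A) Ψ = Ψ.map (algebraMap ℤ A) := by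
    intro A _ _
    have h := PsiAux.aeval_natural (Polynomial.mapRingHom (algebraMap ℤ A))
      (Polynomial.X : Polynomial ℤ) Ψ
    rw [Polynomial.aeval_X_left_apply, Polynomial.coe_mapRingHom, Polynomial.map_X] at h
    exact h.symm
  -- Ψ in the outer variable of ℤ[x][y] is irreducible
  have h5 : Irreducible (Polynomial.aeval (Polynomial.X : Polynomial (Polynomial ℤ)) Ψ) := by
    have h4 : Irreducible (Polynomial.C Ψ : Polynomial (Polynomial ℤ)) :=
      (Polynomial.prime_C_iff.mpr hΨprime).irreducible
    have h4' := (MulEquiv.irreducible_iff (PsiAux.swapEquiv ℤ)).mpr h4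
    simpa using h4'
  -- pass to the fraction field F of ℤ[x]
  set F := FractionRing (Polynomial ℤ) with hF
  have h5m : (Polynomial.aeval (Polynomial.X : Polynomial (Polynomial ℤ)) Ψ).Monic := by
    rw [haevalX (Polynomial ℤ)]
    exact hΨmonic.map _
  have h6 : Irreducible (Polynomial.aeval (Polynomial.X : Polynomial F) Ψ) := by
    have h := (h5m.irreducible_iff_irreducible_map_fraction_map (K := F)).mp h5
    have hmap : (Polynomial.aeval (Polynomial.X : Polynomial (Polynomial ℤ)) Ψ).map
        (algebraMap (Polynomial ℤ) F) = Polynomial.aeval (Polynomial.X : Polynomial F) Ψ := by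
      have h2 := PsiAux.aeval_natural (Polynomial.mapRingHom (algebraMap (Polynomial ℤ) F))
        (Polynomial.X : Polynomial (Polynomial ℤ)) Ψ
      rw [Polynomial.coe_mapRingHom, Polynomial.map_X] at h2
      exact h2
    rwa [hmap] at h
  -- scale the variable by t = the image of x
  set t : F := algebraMap (Polynomial ℤ) F Polynomial.X with ht
  have ht0 : t ≠ 0 := by
    rw [ht]
    intro h
    exact Polynomial.X_ne_zero ((IsFractionRing.injective (Polynomial ℤ) F) (by simp only [map_zero]; exact h))
  have h7 : Irreducible (Polynomial.aeval (Polynomial.C t * Polynomial.X) Ψ) := by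
    have h := (MulEquiv.irreducible_iff (PsiAux.scaleEquiv t ht0)).mpr h6
    have heq : PsiAux.scaleEquiv t ht0 (Polynomial.aeval (Polynomial.X : Polynomial F) Ψ)
        = Polynomial.aeval (Polynomial.C t * Polynomial.X) Ψ := by
      have h2 := PsiAux.aeval_natural ((PsiAux.scaleEquiv t ht0).toAlgHom.toRingHom)
        (Polynomial.X : Polynomial F) Ψ
      rw [show ((PsiAux.scaleEquiv t ht0).toAlgHom.toRingHom (Polynomial.X : Polynomial F))
          = Polynomial.C t * Polynomial.X from PsiAux.scaleEquiv_X t ht0] at h2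
      have h3 : (PsiAux.scaleEquiv t ht0) (Polynomial.aeval (Polynomial.X : Polynomial F) Ψ)
          = (PsiAux.scaleEquiv t ht0).toAlgHom.toRingHom
            (Polynomial.aeval (Polynomial.X : Polynomial F) Ψ) := rfl
      rw [h3]
      exact h2
    rwa [heq] at h
  -- Gauss: descend to ℤ[x][y]
  set P : Polynomial (Polynomial ℤ) :=
    Polynomial.aeval (Polynomial.X * Polynomial.C Polynomial.X) Ψ with hP
  have hmapP : P.map (algebraMap (Polynomial ℤ) F)
      = Polynomial.aeval (Polynomial.C t * Polynomial.X) Ψ := by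
    have h := PsiAux.aeval_natural (Polynomial.mapRingHom (algebraMap (Polynomial ℤ) F))
      (Polynomial.X * Polynomial.C Polynomial.X) Ψ
    rw [Polynomial.coe_mapRingHom, Polynomial.map_mul, Polynomial.map_X, Polynomial.map_C,
      mul_comm Polynomial.X (Polynomial.C (algebraMap (Polynomial ℤ) F Polynomial.X))] at h
    rw [hP, h, ← ht]
  have hPcoeff0 : P.coeff 0 = algebraMap ℤ (Polynomial ℤ) (Ψ.coeff 0) := by
    have h := PsiAux.aeval_natural (Polynomial.evalRingHom (0 : Polynomial ℤ))
      (Polynomial.X * Polynomial.C Polynomial.X) Ψ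
    have h2 : (Polynomial.evalRingHom (0 : Polynomial ℤ))
        (Polynomial.X * Polynomial.C Polynomial.X) = 0 := by simp
    rw [h2] at h
    rw [Polynomial.coeff_zero_eq_eval_zero]
    calc P.eval 0 = (Polynomial.evalRingHom (0 : Polynomial ℤ)) P := rfl
      _ = Polynomial.aeval (0 : Polynomial ℤ) Ψ := h
      _ = algebraMap ℤ (Polynomial ℤ) (Ψ.coeff 0) := (Polynomial.coeff_zero_eq_aeval_zero' Ψ).symm
  have hPprim : P.IsPrimitive := by
    rw [Polynomial.isPrimitive_iff_isUnit_of_C_dvd]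
    intro r hr
    have hr0 : r ∣ P.coeff 0 := (Polynomial.C_dvd_iff_dvd_coeff r P).mp hr 0
    have hca : (algebraMap ℤ (Polynomial ℤ)) (Ψ.coeff 0) = Polynomial.C (Ψ.coeff 0) := by
      rw [eq_intCast (algebraMap ℤ (Polynomial ℤ))]
      exact (Polynomial.C_eq_intCast _).symm
    have hc0ne : P.coeff 0 ≠ 0 := by
      rw [hPcoeff0, hca]
      exact Polynomial.C_ne_zero.mpr hΨ0
    have hdeg : r.natDegree = 0 := by
      have h := Polynomial.natDegree_le_of_dvd hr0 hc0ne
      rw [hPcoeff0, hca] at h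
      simpa using h
    have hrC : r = Polynomial.C (r.coeff 0) := Polynomial.eq_C_of_natDegree_eq_zero hdeg
    -- evaluate x ↦ 1 to see that the content divides Ψ
    set ε : Polynomial (Polynomial ℤ) →+* Polynomial ℤ :=
      Polynomial.mapRingHom (Polynomial.evalRingHom (1 : ℤ)) with hε
    have hεP : ε P = Ψ := by
      have h := PsiAux.aeval_natural ε (Polynomial.X * Polynomial.C Polynomial.X) Ψ
      have h2 : ε (Polynomial.X * Polynomial.C Polynomial.X) = Polynomial.X := by
        rw [hε, Polynomial.coe_mapRingHom, Polynomial.map_mul, Polynomial.map_X,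
          Polynomial.map_C]
        simp
      rw [h2, Polynomial.aeval_X_left_apply] at h
      exact h
    have hdvd : Polynomial.C (r.coeff 0 : ℤ) ∣ Ψ := by
      have hd := map_dvd ε hr
      rw [hεP] at hd
      have hεC : ε (Polynomial.C r) = Polynomial.C (r.coeff 0) := by
        rw [hε, Polynomial.coe_mapRingHom, Polynomial.map_C]
        congr 1
        conv_lhs => rw [hrC]
        simp
      rwa [hεC] at hd
    have hdvd1 : (r.coeff 0 : ℤ) ∣ Ψ.coeff Ψ.natDegree :=
      (Polynomial.C_dvd_iff_dvd_coeff _ _).mp hdvd Ψ.natDegree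
    rw [hΨmonic.coeff_natDegree] at hdvd1
    rw [hrC]
    exact Polynomial.isUnit_C.mpr (isUnit_of_dvd_one hdvd1)
  have hPirr : Irreducible P :=
    hPprim.irreducible_of_irreducible_map_of_injective
      (IsFractionRing.injective (Polynomial ℤ) F) (by rw [hmapP]; exact h7)
  -- transfer along the equivalence E
  have hE : PsiAux.E ℤ (Polynomial.aeval
      (MvPolynomial.X 0 * MvPolynomial.X 1 : MvPolynomial (Fin 2) ℤ) Ψ) = P := by
    have h := PsiAux.aeval_natural ((PsiAux.E ℤ).toAlgHom.toRingHom)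
      (MvPolynomial.X 0 * MvPolynomial.X 1 : MvPolynomial (Fin 2) ℤ) Ψ
    rw [hP]
    rw [show ((PsiAux.E ℤ).toAlgHom.toRingHom
        (Polynomial.aeval (MvPolynomial.X 0 * MvPolynomial.X 1 : MvPolynomial (Fin 2) ℤ) Ψ))
        = PsiAux.E ℤ (Polynomial.aeval
          (MvPolynomial.X 0 * MvPolynomial.X 1 : MvPolynomial (Fin 2) ℤ) Ψ) from rfl] at h
    rw [h]
    congr 1
    rw [show ((PsiAux.E ℤ).toAlgHom.toRingHom
        (MvPolynomial.X 0 * MvPolynomial.X 1 : MvPolynomial (Fin 2) ℤ))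
        = PsiAux.E ℤ (MvPolynomial.X 0 * MvPolynomial.X 1 : MvPolynomial (Fin 2) ℤ) from rfl]
    rw [map_mul, PsiAux.E_X0, PsiAux.E_X1]
  exact (MulEquiv.irreducible_iff (PsiAux.E ℤ)).mp (by rw [hE]; exact hPirr)
end

section
/- Let l, m, n be positive integers with m+1 < n, (m+1) | n, (m+1) | l, and suppose ⌊n/l⌋ − ⌊(m+1)/l⌋ − ⌊(n−m−1)/l⌋ = 1. Write n − (m+1) = ql + r with 0 ≤ r < l. Then r + m + 1 = l and l | n. -/
/-!
Write `n = (m + 1) + N` with `N = n - (m + 1) = q l + r`. The floor identity says that adding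
`m + 1` and `N` produces a carry modulo `l`, i.e. `l ≤ (m + 1) % l + r ≤ (m + 1) + r`. On the other
hand `m + 1` divides `l` and `N`, hence `r`, hence the positive number `l - r`, so
`m + 1 ≤ l - r`. The two bounds force `r + m + 1 = l`, and then `n = (q + 1) l`.
-/

namespace Nat

theorem le_mod_add_mod_of_add_div_eq_add_one {a b c : ℕ}
    (h : (a + b) / c = a / c + b / c + 1) : c ≤ a % c + b % c := by
  by_contra hc
  rw [add_div_eq_of_add_mod_lt (not_le.mp hc)] at h
  omega

theorem add_eq_of_dvd_of_dvd_of_le_add {a r l : ℕ} (hal : a ∣ l) (har : a ∣ r) (hrl : r < l)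
    (hle : l ≤ a + r) : a + r = l := by
  have : a ≤ l - r := le_of_dvd (Nat.sub_pos_of_lt hrl) (Nat.dvd_sub hal har)
  omega

end Nat

theorem floor_identity_key_step_general (l m n q r : ℕ)
    (hmn : m + 1 < n) (hdvd1 : (m + 1) ∣ n) (hdvd2 : (m + 1) ∣ l)
    (hqr : n - (m + 1) = q * l + r) (hr : r < l)
    (hfloor : ((n / l : ℕ) : ℤ) - ((m + 1) / l : ℕ) - ((n - m - 1) / l : ℕ) = 1) :
    r + m + 1 = l ∧ l ∣ n := by
  have hsplit : n = (m + 1) + (n - (m + 1)) := by omega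
  have hmod : (n - (m + 1)) % l = r := by
    rw [hqr, add_comm, Nat.add_mul_mod_self_right, Nat.mod_eq_of_lt hr]
  have hcarry : l ≤ (m + 1) + r := by
    refine le_trans ?_ (Nat.add_le_add_right (Nat.mod_le (m + 1) l) r)
    rw [← hmod]
    apply Nat.le_mod_add_mod_of_add_div_eq_add_one
    rw [← hsplit, ← Nat.sub_sub]
    omega
  have hdvd_r : (m + 1) ∣ r :=
    hmod ▸ (Nat.dvd_mod_iff hdvd2).mpr (Nat.dvd_sub hdvd1 dvd_rfl)
  have hsum : m + 1 + r = l := Nat.add_eq_of_dvd_of_dvd_of_le_add hdvd2 hdvd_r hr hcarry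
  refine ⟨by omega, ⟨q + 1, ?_⟩⟩
  rw [hsplit, hqr, ← hsum]
  ring

theorem floor_identity_key_step (l m n q r : ℕ) (hl : 0 < l) (hm : 0 < m) (hn : 0 < n)
    (hmn : m + 1 < n) (hdvd1 : (m + 1) ∣ n) (hdvd2 : (m + 1) ∣ l)
    (hqr : n - (m + 1) = q * l + r) (hr : r < l)
    (hfloor : ((n / l : ℕ) : ℤ) - ((m + 1) / l : ℕ) - ((n - m - 1) / l : ℕ) = 1) :
    r + m + 1 = l ∧ l ∣ n :=
  floor_identity_key_step_general l m n q r hmn hdvd1 hdvd2 hqr hr hfloor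
end

section
/- For every positive integer n, the least common multiple (up to units) of the quantum binomial coefficients [n choose 0], [n choose 1], ..., [n choose n] in ℤ[x] equals ∏_{1 ≤ k ≤ n, k ∤ (n+1)} Θ_k. Equivalently, the fractional ℤ[x]-ideal generated by the inverses [n choose k]^{−1}, 0 ≤ k ≤ n, is principal, generated by (∏_{1 ≤ k ≤ n, k ∤ n+1} Θ_k)^{−1}. -/
open Polynomial

noncomputable def qfact : ℕ → Polynomial ℤ
  | 0 => 1
  | (n + 1) => qnum (n + 1) * qfact n


/-!
Over `ℝ`, `[m + 1]` is the Chebyshev polynomial `S_m`, which vanishes at `2 cos (jπ/(m+1))` for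
`0 < j ≤ m`. Grouping these roots by the reduced denominator of `j/(m+1)` gives
`[m] = ∏_{d ∣ m} Θ_d`; the degrees agree because `∑_{d ∣ m} φ(d) = m`. Hence
`[k]! = ∏_{d ≤ n} Θ_d ^ ⌊k/d⌋`, and `[n choose k]` is the product of the `Θ_d`, `d ≤ n`, for which
`⌊n/d⌋ = ⌊k/d⌋ + ⌊(n-k)/d⌋ + 1`, i.e. `n mod d < k mod d`. Such a `k ≤ n` exists iff `d ∤ n + 1`.
The `Θ_d` are monic and pairwise coprime over `ℝ`, so their product divides every common
multiple in `ℤ[x]`.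
-/

open Finset Real

lemma Nat.le_mod_add_mod_sub_iff_mod_lt_mod {d k n : ℕ} (hd : 0 < d) (hk : k ≤ n) :
    d ≤ k % d + (n - k) % d ↔ n % d < k % d := by
  have h := Nat.add_mod_add_ite k (n - k) d
  rw [Nat.add_sub_cancel' hk] at h
  have := Nat.mod_lt k hd
  have := Nat.mod_lt (n - k) hd
  split_ifs at h <;> omega

lemma Nat.dvd_add_one_iff_mod_add_one_eq {d n : ℕ} (hd : 0 < d) :
    d ∣ n + 1 ↔ n % d + 1 = d := by
  have h := Nat.add_mod_add_ite n 1 d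
  rw [Nat.dvd_iff_mod_eq_zero]
  have := Nat.mod_lt n hd
  have := Nat.mod_lt (n + 1) hd
  rcases Nat.lt_or_ge 1 d with h1 | h1
  · rw [Nat.mod_eq_of_lt h1] at h
    split_ifs at h <;> omega
  · obtain rfl : d = 1 := by omega
    simp

lemma Nat.exists_le_mod_add_mod_sub_iff_not_dvd_add_one {d n : ℕ} (hd : 0 < d) (hdn : d ≤ n) :
    (∃ k ≤ n, d ≤ k % d + (n - k) % d) ↔ ¬ d ∣ n + 1 := by
  rw [Nat.dvd_add_one_iff_mod_add_one_eq hd]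
  have := Nat.mod_lt n hd
  constructor
  · rintro ⟨k, hk, hcarry⟩
    rw [Nat.le_mod_add_mod_sub_iff_mod_lt_mod hd hk] at hcarry
    have := Nat.mod_lt k hd
    omega
  · intro h
    have hlt : n % d + 1 < d := by omega
    refine ⟨n % d + 1, by omega, ?_⟩
    rw [Nat.le_mod_add_mod_sub_iff_mod_lt_mod hd (by omega), Nat.mod_eq_of_lt hlt]
    exact Nat.lt_succ_self _

lemma Nat.card_filter_coprime_Ico_one_add (d : ℕ) :
    #{k ∈ Ico 1 d | k.Coprime d} + (if d = 1 then 1 else 0) = d.totient := by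
  rcases Nat.eq_zero_or_pos d with rfl | hd
  · simp
  rw [← Nat.filter_coprime_Ico_eq_totient d 1, add_comm 1 d, Nat.Ico_succ_right_eq_insert_Ico hd,
    filter_insert]
  simp_rw [Nat.coprime_comm (m := d), Nat.coprime_self]
  split_ifs
  · rw [card_insert_of_notMem (by simp)]
  · rfl

lemma Nat.sum_divisors_card_filter_coprime_Ico_one {N : ℕ} (hN : 0 < N) :
    ∑ d ∈ N.divisors, #{k ∈ Ico 1 d | k.Coprime d} = N - 1 := by
  have h := sum_congr rfl fun d (_ : d ∈ N.divisors) => Nat.card_filter_coprime_Ico_one_add d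
  rw [sum_add_distrib, Nat.sum_totient, sum_ite_eq', if_pos (Nat.one_mem_divisors.mpr hN.ne')] at h
  omega

lemma Real.mul_eq_mul_of_cos_mul_pi_div_eq {k d k' d' : ℕ} (hd : 0 < d) (hd' : 0 < d')
    (hk : k ≤ d) (hk' : k' ≤ d') (h : cos (k * π / d) = cos (k' * π / d')) :
    k * d' = k' * d := by
  have mem_Icc {k d : ℕ} (hd : 0 < d) (hk : k ≤ d) : (k : ℝ) * π / d ∈ Set.Icc 0 π := by
    refine ⟨by positivity, div_le_of_le_mul₀ (by positivity) pi_pos.le ?_⟩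
    rw [mul_comm]
    gcongr
  have h := injOn_cos (mem_Icc hd hk) (mem_Icc hd' hk') h
  rw [div_eq_div_iff (by positivity) (by positivity)] at h
  have : ((k * d' : ℕ) : ℝ) = (k' * d : ℕ) := by
    push_cast
    exact (mul_left_inj' pi_ne_zero).mp (by linarith)
  exact_mod_cast this

lemma Nat.eq_of_coprime_of_mul_eq_mul {k d k' d' : ℕ} (hkd : k.Coprime d) (hkd' : k'.Coprime d')
    (h : k * d' = k' * d) : d = d' :=
  Nat.dvd_antisymm (hkd.symm.dvd_of_dvd_mul_left ⟨k', by rw [h, mul_comm]⟩)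
    (hkd'.symm.dvd_of_dvd_mul_left ⟨k, by rw [← h, mul_comm]⟩)

lemma Polynomial.prod_X_sub_C_dvd_of_injOn {K ι : Type*} [Field K] {s : Finset ι} {f : ι → K}
    {p : K[X]} (hf : Set.InjOn f s) (hroot : ∀ i ∈ s, p.IsRoot (f i)) :
    ∏ i ∈ s, (X - C (f i)) ∣ p :=
  prod_dvd_of_coprime
    (fun _ hi _ hj hij =>
      isCoprime_X_sub_C_of_isUnit_sub (sub_ne_zero.mpr (hf.ne hi hj hij)).isUnit)
    (fun i hi => dvd_iff_isRoot.mpr (hroot i hi))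

namespace Polynomial.Chebyshev

variable (R : Type*) [CommRing R] [IsDomain R] [NeZero (2 : R)]

lemma natDegree_S_natCast (n : ℕ) : (S R n).natDegree = n := by
  have h := congrArg natDegree (S_comp_two_mul_X R n)
  rwa [natDegree_comp, natDegree_U_natCast, ← C_ofNat, natDegree_C_mul_X _ two_ne_zero,
    mul_one] at h

lemma monic_S_natCast (n : ℕ) : (S R n).Monic := by
  have h := congrArg leadingCoeff (S_comp_two_mul_X R n)
  rw [← C_ofNat, leadingCoeff_comp (by rw [natDegree_C_mul_X _ two_ne_zero]; exact one_ne_zero),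
    leadingCoeff_U_natCast, natDegree_S_natCast, leadingCoeff_C_mul_X] at h
  exact (mul_eq_right₀ (pow_ne_zero n two_ne_zero)).mp h

lemma isRoot_S_real_two_mul_cos {m j : ℕ} (hj : 0 < j) (hjm : j < m + 1) :
    (S ℝ m).IsRoot (2 * cos (j * π / (m + 1 : ℕ))) := by
  have hsin : sin (j * π / (m + 1 : ℕ)) ≠ 0 := by
    refine (sin_pos_of_pos_of_lt_pi (by positivity) ?_).ne'
    rw [div_lt_iff₀ (by positivity), mul_comm]
    gcongr
  have h := S_two_mul_real_cos (j * π / (m + 1 : ℕ)) m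
  rw [show ((m : ℤ) : ℝ) + 1 = (m + 1 : ℕ) by push_cast; rfl,
    mul_div_cancel₀ _ (by positivity), sin_nat_mul_pi] at h
  exact (mul_eq_zero.mp h).resolve_right hsin

end Polynomial.Chebyshev

lemma qnum_succ_eq_S (m : ℕ) : qnum (m + 1) = Chebyshev.S ℤ m := by
  induction m using Nat.twoStepInduction with
  | zero => simp [qnum]
  | one => simp [qnum]
  | more m ih₀ ih₁ =>
    rw [show qnum (m + 2 + 1) = X * qnum (m + 1 + 1) - qnum (m + 1) from rfl, ih₀, ih₁]
    push_cast
    exact (Chebyshev.S_add_two ℤ m).symm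

lemma monic_thetaR (d : ℕ) : (thetaR d).Monic :=
  monic_prod_of_monic _ _ fun _ _ => monic_X_sub_C _

lemma natDegree_thetaR (d : ℕ) : (thetaR d).natDegree = #{k ∈ Ico 1 d | k.Coprime d} := by
  rw [thetaR, natDegree_prod_of_monic _ _ fun _ _ => monic_X_sub_C _]
  simp only [natDegree_X_sub_C, sum_const, smul_eq_mul, mul_one]

lemma isCoprime_thetaR {d d' : ℕ} (hdd' : d ≠ d') : IsCoprime (thetaR d) (thetaR d') := by
  refine IsCoprime.prod_left fun k hk => IsCoprime.prod_right fun k' hk' => ?_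
  simp only [mem_filter, mem_Ico] at hk hk'
  refine isCoprime_X_sub_C_of_isUnit_sub (sub_ne_zero.mpr fun h => hdd' ?_).isUnit
  exact Nat.eq_of_coprime_of_mul_eq_mul hk.2 hk'.2 <| mul_eq_mul_of_cos_mul_pi_div_eq
    (by omega) (by omega) hk.1.2.le hk'.1.2.le (by linarith)

lemma thetaR_dvd_S {m d : ℕ} (hd : d ∣ m + 1) : thetaR d ∣ Chebyshev.S ℝ m := by
  obtain ⟨e, he⟩ := hd
  have he0 : 0 < e := Nat.pos_of_ne_zero (by rintro rfl; simp at he)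
  refine prod_X_sub_C_dvd_of_injOn (fun k hk k' hk' h => ?_) fun k hk => ?_
  · simp only [coe_filter, Set.mem_ofPred_eq, mem_Ico] at hk hk'
    have := mul_eq_mul_of_cos_mul_pi_div_eq (by omega) (by omega) hk.1.2.le hk'.1.2.le
      (by simpa using h)
    exact Nat.eq_of_mul_eq_mul_right (by omega) this
  · simp only [mem_filter, mem_Ico] at hk
    have hangle : (k : ℝ) * π / d = ((k * e : ℕ) : ℝ) * π / (m + 1 : ℕ) := by
      rw [he]
      push_cast
      field_simp
    rw [hangle]
    exact Chebyshev.isRoot_S_real_two_mul_cos (Nat.mul_pos (by omega) he0)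
      (he ▸ Nat.mul_lt_mul_of_pos_right hk.1.2 he0)

lemma S_real_eq_prod_thetaR (m : ℕ) : Chebyshev.S ℝ m = ∏ d ∈ (m + 1).divisors, thetaR d := by
  refine eq_of_monic_of_dvd_of_natDegree_le (monic_prod_of_monic _ _ fun d _ => monic_thetaR d)
    (Chebyshev.monic_S_natCast ℝ m) (prod_dvd_of_coprime ?_ fun d hd => ?_) ?_
  · exact fun d _ d' _ hdd' => isCoprime_thetaR hdd'
  · exact thetaR_dvd_S (Nat.dvd_of_mem_divisors hd)
  · rw [natDegree_prod_of_monic _ _ fun d _ => monic_thetaR d, Chebyshev.natDegree_S_natCast]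
    simp only [natDegree_thetaR]
    rw [Nat.sum_divisors_card_filter_coprime_Ico_one m.add_one_pos, Nat.add_sub_cancel]

lemma map_qfact_eq_prod_thetaR_pow {k n : ℕ} (hk : k ≤ n) :
    (qfact k).map (Int.castRingHom ℝ) = ∏ d ∈ Icc 1 n, thetaR d ^ (k / d) := by
  induction k with
  | zero => simp [qfact]
  | succ k ih =>
    have hdiv : {d ∈ Icc 1 n | d ∣ k + 1} = (k + 1).divisors := by
      ext d
      simp only [mem_filter, mem_Icc, Nat.mem_divisors]
      exact ⟨fun h => ⟨h.2, k.succ_ne_zero⟩, fun h =>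
        ⟨⟨Nat.pos_of_dvd_of_pos h.1 k.succ_pos, (Nat.le_of_dvd k.succ_pos h.1).trans hk⟩, h.1⟩⟩
    rw [qfact, Polynomial.map_mul, ih (by omega), qnum_succ_eq_S, Chebyshev.map_S,
      S_real_eq_prod_thetaR, ← hdiv, prod_filter, ← prod_mul_distrib]
    refine prod_congr rfl fun d _ => ?_
    rw [Nat.succ_div, pow_add, mul_comm]
    split_ifs <;> simp

lemma eq_prod_theta_of_mul_qfact_eq {Θ : ℕ → ℤ[X]}
    (hΘ : ∀ m, 0 < m → (Θ m).map (Int.castRingHom ℝ) = thetaR m) {n k : ℕ} {B : ℤ[X]}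
    (hk : k ≤ n) (hB : B * (qfact k * qfact (n - k)) = qfact n) :
    B = ∏ d ∈ Icc 1 n with d ≤ k % d + (n - k) % d, Θ d := by
  have hsplit : ∀ d ∈ Icc 1 n, thetaR d ^ (n / d) =
      thetaR d ^ (k / d) * thetaR d ^ ((n - k) / d) *
        thetaR d ^ (if d ≤ k % d + (n - k) % d then 1 else 0) := by
    intro d hd
    rw [← pow_add, ← pow_add, ← Nat.add_div (by simp at hd; omega), Nat.add_sub_cancel' hk]
  have hcarry : ∏ d ∈ Icc 1 n, thetaR d ^ (if d ≤ k % d + (n - k) % d then 1 else 0) =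
      (∏ d ∈ Icc 1 n with d ≤ k % d + (n - k) % d, Θ d).map (Int.castRingHom ℝ) := by
    rw [Polynomial.map_prod, prod_filter]
    refine prod_congr rfl fun d hd => ?_
    split_ifs
    · rw [pow_one, hΘ d (by simp at hd; omega)]
    · rfl
  have hne : (∏ d ∈ Icc 1 n, thetaR d ^ (k / d)) * ∏ d ∈ Icc 1 n, thetaR d ^ ((n - k) / d) ≠ 0 :=
    mul_ne_zero (prod_ne_zero_iff.mpr fun d _ => pow_ne_zero _ (monic_thetaR d).ne_zero)
      (prod_ne_zero_iff.mpr fun d _ => pow_ne_zero _ (monic_thetaR d).ne_zero)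
  have h := congrArg (Polynomial.map (Int.castRingHom ℝ)) hB
  rw [Polynomial.map_mul, Polynomial.map_mul, map_qfact_eq_prod_thetaR_pow hk,
    map_qfact_eq_prod_thetaR_pow (n.sub_le k), map_qfact_eq_prod_thetaR_pow le_rfl,
    prod_congr rfl hsplit, prod_mul_distrib, prod_mul_distrib, hcarry,
    mul_comm _ (Polynomial.map _ _)] at h
  exact map_injective _ (Int.castRingHom ℝ).injective_int (mul_right_cancel₀ hne h)

lemma prod_theta_dvd {Θ : ℕ → ℤ[X]}
    (hΘ : ∀ m, 0 < m → (Θ m).map (Int.castRingHom ℝ) = thetaR m) {s : Finset ℕ} {p : ℤ[X]}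
    (hs : ∀ d ∈ s, 0 < d) (h : ∀ d ∈ s, Θ d ∣ p) : ∏ d ∈ s, Θ d ∣ p := by
  have hmonic : ∀ d ∈ s, (Θ d).Monic := fun d hd =>
    monic_of_injective (Int.castRingHom ℝ).injective_int (hΘ d (hs d hd) ▸ monic_thetaR d)
  rw [← map_dvd_map _ (Int.castRingHom ℝ).injective_int (monic_prod_of_monic _ _ hmonic),
    Polynomial.map_prod]
  refine prod_dvd_of_coprime (fun d hd d' hd' hdd' => ?_) fun d hd => Polynomial.map_dvd _ (h d hd)
  simp only [Function.onFun, hΘ d (hs d hd), hΘ d' (hs d' hd')]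
  exact isCoprime_thetaR hdd'

theorem qbinom_lcm_general (Θ : ℕ → Polynomial ℤ)
    (hΘ : ∀ m, 0 < m → (Θ m).map (Int.castRingHom ℝ) = thetaR m)
    (n : ℕ) (B : ℕ → Polynomial ℤ)
    (hB : ∀ k ≤ n, B k * (qfact k * qfact (n - k)) = qfact n) :
    (∀ k ≤ n, B k ∣ ∏ j ∈ (Finset.Icc 1 n).filter (fun j => ¬ j ∣ (n + 1)), Θ j) ∧
      ∀ m : Polynomial ℤ, (∀ k ≤ n, B k ∣ m) →
        (∏ j ∈ (Finset.Icc 1 n).filter (fun j => ¬ j ∣ (n + 1)), Θ j) ∣ m := by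
  have hB_eq k (hk : k ≤ n) := eq_prod_theta_of_mul_qfact_eq hΘ hk (hB k hk)
  refine ⟨fun k hk => ?_, fun m hm => prod_theta_dvd hΘ (fun j hj => ?_) fun j hj => ?_⟩
  · rw [hB_eq k hk]
    refine prod_dvd_prod_of_subset _ _ _ fun d hd => ?_
    simp only [mem_filter, mem_Icc] at hd ⊢
    exact ⟨hd.1, (Nat.exists_le_mod_add_mod_sub_iff_not_dvd_add_one hd.1.1 hd.1.2).mp ⟨k, hk, hd.2⟩⟩
  · exact (mem_Icc.mp (mem_filter.mp hj).1).1
  · simp only [mem_filter, mem_Icc] at hj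
    obtain ⟨k, hk, hcarry⟩ :=
      (Nat.exists_le_mod_add_mod_sub_iff_not_dvd_add_one hj.1.1 hj.1.2).mpr hj.2
    refine dvd_trans ?_ (hm k hk)
    rw [hB_eq k hk]
    exact dvd_prod_of_mem _ (mem_filter.mpr ⟨mem_Icc.mpr hj.1, hcarry⟩)

theorem qbinom_lcm (Θ : ℕ → Polynomial ℤ)
    (hΘ : ∀ m, 0 < m → (Θ m).map (Int.castRingHom ℝ) = thetaR m)
    (n : ℕ) (hn : 0 < n) (B : ℕ → Polynomial ℤ)
    (hB : ∀ k ≤ n, B k * (qfact k * qfact (n - k)) = qfact n) :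
    (∀ k ≤ n, B k ∣ ∏ j ∈ (Finset.Icc 1 n).filter (fun j => ¬ j ∣ (n + 1)), Θ j) ∧
      ∀ m : Polynomial ℤ, (∀ k ≤ n, B k ∣ m) →
        (∏ j ∈ (Finset.Icc 1 n).filter (fun j => ¬ j ∣ (n + 1)), Θ j) ∣ m :=
  qbinom_lcm_general Θ hΘ n B hB
end
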